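/- For λ > 0 and m > 0 with √λ|J| < m, define Q₀ = (|J|/(√λ m))^{1/2} / (1 − √λ|J|/m). Then the extremal Kerr–Newman–AdS mass m_ext(J,Q) (the infimum over A > 0 of F₁ + λF₂ from the Smarr formula) satisfies m_ext ≥ m_bps := √λ|J| + |Q|, with equality if and only if |Q| = Q₀. -/

import Mathlib

noncomputable def F1 (J Q A : ℝ) : ℝ :=
  A / (16 * Real.pi) + (Real.pi / A) * (4 * J ^ 2 + Q ^ 4) + Q ^ 2 / 2

noncomputable def F2 (lam J Q A : ℝ) : ℝ :=
  J ^ 2 + (A / (8 * Real.pi)) *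
    (Q ^ 2 + A / (4 * Real.pi) + lam * A ^ 2 / (32 * Real.pi ^ 2))

/-- The extremal Kerr–Newman–AdS mass: `m_ext² = inf_{A>0} (F₁ + λF₂)`. -/
noncomputable def mextJQ (lam J Q : ℝ) : ℝ :=
  Real.sqrt (sInf {x | ∃ A > 0, x = F1 J Q A + lam * F2 lam J Q A})

/-! With `x = A / (4π)`, `F₁ + λF₂` is `massSq λ J Q x`, and completing squares gives
`massSq x = (√λ|J| + |Q|)² + ((x + λx² - Q²)² + 4(|J| - √λ x|Q|)²) / (4x)`.
So `m_ext ≥ m_bps`. As `massSq` blows up at both ends of `(0, ∞)` its infimum is attained, hence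
`m_ext = m_bps` iff both squares vanish at some `x > 0`, and eliminating `x` gives
`|Q| = Q₀(m_bps)`. Conversely, if `|Q| = Q₀(m)` the first square vanishes at
`x = |J| / (√λ (m - √λ|J|))`, and the bound `m² ≤ massSq x` forces `m ≤ m_bps`. -/

open Real Set Filter Topology

noncomputable def massSq (lam J Q x : ℝ) : ℝ :=
  x / 4 + (4 * J ^ 2 + Q ^ 4) / (4 * x) + Q ^ 2 / 2 + lam * J ^ 2
    + lam * x * Q ^ 2 / 2 + lam * x ^ 2 / 2 + lam ^ 2 * x ^ 3 / 4

noncomputable def bpsMass (lam J Q : ℝ) : ℝ := √lam * |J| + |Q|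

/-- The paper's `Q₀`, as a function of the mass `m`. -/
noncomputable def bpsCharge (lam J m : ℝ) : ℝ :=
  √(|J| / (√lam * m)) / (1 - √lam * |J| / m)

lemma F1_add_mul_F2 (lam J Q : ℝ) {A : ℝ} (hA : A ≠ 0) :
    F1 J Q A + lam * F2 lam J Q A = massSq lam J Q (A / (4 * π)) := by
  have := pi_ne_zero
  unfold F1 F2 massSq
  field_simp
  ring

lemma setOf_F1_add_mul_F2 (lam J Q : ℝ) :
    {x | ∃ A > 0, x = F1 J Q A + lam * F2 lam J Q A} = massSq lam J Q '' Ioi 0 := by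
  ext y
  constructor
  · rintro ⟨A, hA, rfl⟩
    exact ⟨A / (4 * π), mem_Ioi.2 (by positivity), (F1_add_mul_F2 lam J Q hA.ne').symm⟩
  · rintro ⟨x, hx : 0 < x, rfl⟩
    refine ⟨4 * π * x, by positivity, ?_⟩
    rw [F1_add_mul_F2 lam J Q (by positivity), mul_div_cancel_left₀ x (by positivity)]

lemma mextJQ_eq_sqrt_sInf (lam J Q : ℝ) :
    mextJQ lam J Q = √(sInf (massSq lam J Q '' Ioi 0)) := by
  rw [mextJQ, setOf_F1_add_mul_F2]

section

variable {lam : ℝ} (J Q : ℝ) {x : ℝ}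

lemma massSq_eq_bpsMass_sq_add (hlam : 0 ≤ lam) (hx : x ≠ 0) :
    massSq lam J Q x = bpsMass lam J Q ^ 2
      + ((x + lam * x ^ 2 - Q ^ 2) ^ 2 + 4 * (|J| - √lam * x * |Q|) ^ 2) / (4 * x) := by
  obtain ⟨t, ht, rfl⟩ : ∃ t, 0 ≤ t ∧ lam = t ^ 2 :=
    ⟨√lam, sqrt_nonneg _, (sq_sqrt hlam).symm⟩
  have hJ : J ^ 2 = |J| ^ 2 := (sq_abs J).symm
  have hQ : Q ^ 2 = |Q| ^ 2 := (sq_abs Q).symm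
  have hQ4 : Q ^ 4 = |Q| ^ 4 := by rw [← abs_pow, abs_of_nonneg (by positivity)]
  unfold massSq bpsMass
  rw [sqrt_sq ht, hQ4, hQ, hJ]
  field_simp
  ring

lemma massSq_eq_bpsMass_sq_iff (hlam : 0 ≤ lam) (hx : 0 < x) :
    massSq lam J Q x = bpsMass lam J Q ^ 2 ↔
      x + lam * x ^ 2 = Q ^ 2 ∧ |J| = √lam * x * |Q| := by
  rw [massSq_eq_bpsMass_sq_add J Q hlam hx.ne', add_eq_left,
    div_eq_zero_iff, or_iff_left (by positivity)]
  constructor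
  · intro h
    have h1 := sq_nonneg (x + lam * x ^ 2 - Q ^ 2)
    have h2 := sq_nonneg (|J| - √lam * x * |Q|)
    constructor <;> nlinarith
  · rintro ⟨h1, h2⟩
    rw [h1, h2]
    ring

lemma bpsMass_sq_le_massSq (hlam : 0 ≤ lam) (hx : 0 < x) :
    bpsMass lam J Q ^ 2 ≤ massSq lam J Q x := by
  rw [massSq_eq_bpsMass_sq_add J Q hlam hx.ne']
  exact le_add_of_nonneg_right (by positivity)

lemma div_le_massSq (hlam : 0 ≤ lam) (hx : 0 < x) :
    (4 * J ^ 2 + Q ^ 4) / (4 * x) ≤ massSq lam J Q x := by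
  unfold massSq
  linarith [sq_nonneg Q, show 0 ≤ lam * J ^ 2 by positivity,
    show 0 ≤ lam * x * Q ^ 2 / 2 by positivity, show 0 ≤ lam * x ^ 2 / 2 by positivity,
    show 0 ≤ lam ^ 2 * x ^ 3 / 4 by positivity]

lemma quarter_le_massSq (hlam : 0 ≤ lam) (hx : 0 < x) :
    x / 4 ≤ massSq lam J Q x := by
  unfold massSq
  linarith [sq_nonneg Q, show 0 ≤ (4 * J ^ 2 + Q ^ 4) / (4 * x) by positivity,
    show 0 ≤ lam * J ^ 2 by positivity, show 0 ≤ lam * x * Q ^ 2 / 2 by positivity,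
    show 0 ≤ lam * x ^ 2 / 2 by positivity, show 0 ≤ lam ^ 2 * x ^ 3 / 4 by positivity]

lemma bpsMass_sq_le_sInf (hlam : 0 ≤ lam) :
    bpsMass lam J Q ^ 2 ≤ sInf (massSq lam J Q '' Ioi 0) :=
  le_csInf ⟨_, mem_image_of_mem _ (mem_Ioi.2 one_pos)⟩
    (forall_mem_image.2 fun _ hx ↦ bpsMass_sq_le_massSq J Q hlam hx)

lemma sInf_le_massSq (hlam : 0 ≤ lam) (hx : 0 < x) :
    sInf (massSq lam J Q '' Ioi 0) ≤ massSq lam J Q x :=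
  csInf_le ⟨_, forall_mem_image.2 fun _ hy ↦ bpsMass_sq_le_massSq J Q hlam hy⟩
    (mem_image_of_mem _ hx)

lemma mextJQ_sq (hlam : 0 ≤ lam) : mextJQ lam J Q ^ 2 = sInf (massSq lam J Q '' Ioi 0) := by
  rw [mextJQ_eq_sqrt_sInf, sq_sqrt ((sq_nonneg _).trans (bpsMass_sq_le_sInf J Q hlam))]

lemma bpsMass_le_mextJQ (hlam : 0 ≤ lam) : bpsMass lam J Q ≤ mextJQ lam J Q := by
  rw [mextJQ_eq_sqrt_sInf]
  exact le_sqrt_of_sq_le (bpsMass_sq_le_sInf J Q hlam)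

lemma mextJQ_sq_le_massSq (hlam : 0 ≤ lam) (hx : 0 < x) :
    mextJQ lam J Q ^ 2 ≤ massSq lam J Q x :=
  mextJQ_sq J Q hlam ▸ sInf_le_massSq J Q hlam hx

lemma tendsto_massSq_exp_cocompact (hlam : 0 ≤ lam) (hJQ : J ≠ 0 ∨ Q ≠ 0) :
    Tendsto (fun u ↦ massSq lam J Q (exp u)) (cocompact ℝ) atTop := by
  have hc : 0 < (4 * J ^ 2 + Q ^ 4) / 4 := by
    rcases hJQ with h | h <;> positivity
  rw [cocompact_eq_atBot_atTop, tendsto_sup]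
  constructor
  · refine tendsto_atTop_mono (fun u ↦ ?_)
      ((tendsto_exp_atTop.comp tendsto_neg_atBot_atTop).const_mul_atTop hc)
    calc (4 * J ^ 2 + Q ^ 4) / 4 * exp (-u) = (4 * J ^ 2 + Q ^ 4) / (4 * exp u) := by
          rw [exp_neg]; field_simp
      _ ≤ massSq lam J Q (exp u) := div_le_massSq J Q hlam (exp_pos u)
  · exact tendsto_atTop_mono (fun u ↦ quarter_le_massSq J Q hlam (exp_pos u))
      (tendsto_exp_atTop.atTop_div_const (by norm_num))

lemma exists_isMinOn_massSq (hlam : 0 ≤ lam) (hJQ : J ≠ 0 ∨ Q ≠ 0) :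
    ∃ x ∈ Ioi (0 : ℝ), IsMinOn (massSq lam J Q) (Ioi 0) x := by
  have hcont : Continuous fun u ↦ massSq lam J Q (exp u) := by
    unfold massSq
    fun_prop (disch := intro; positivity)
  obtain ⟨u, hu⟩ := hcont.exists_forall_le (tendsto_massSq_exp_cocompact J Q hlam hJQ)
  refine ⟨exp u, exp_pos u, fun y (hy : 0 < y) ↦ ?_⟩
  have := hu (log y)
  rwa [exp_log hy] at this

end

lemma mextJQ_zero_zero {lam : ℝ} (hlam : 0 ≤ lam) : mextJQ lam 0 0 = 0 := by
  have hpoly : ∀ x, massSq lam 0 0 x = x / 4 + lam * x ^ 2 / 2 + lam ^ 2 * x ^ 3 / 4 := by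
    intro x; simp [massSq]
  have hlim : Tendsto (massSq lam 0 0) (𝓝[>] 0) (𝓝 0) := by
    rw [funext hpoly]
    exact tendsto_nhdsWithin_of_tendsto_nhds (Continuous.tendsto' (by fun_prop) 0 0 (by simp))
  have hle : sInf (massSq lam 0 0 '' Ioi 0) ≤ 0 :=
    ge_of_tendsto hlim (eventually_nhdsWithin_of_forall fun x hx ↦ sInf_le_massSq 0 0 hlam hx)
  rw [mextJQ_eq_sqrt_sInf, sqrt_eq_zero_of_nonpos hle]

section

variable {lam J Q : ℝ}

lemma exists_massSq_eq_bpsMass_sq_of_mextJQ_eq (hlam : 0 ≤ lam) (hJQ : J ≠ 0 ∨ Q ≠ 0)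
    (h : mextJQ lam J Q = bpsMass lam J Q) :
    ∃ x > 0, massSq lam J Q x = bpsMass lam J Q ^ 2 := by
  obtain ⟨x, hx, hmin⟩ := exists_isMinOn_massSq J Q hlam hJQ
  refine ⟨x, hx, le_antisymm ?_ (bpsMass_sq_le_massSq J Q hlam hx)⟩
  calc massSq lam J Q x ≤ sInf (massSq lam J Q '' Ioi 0) :=
        le_csInf ⟨_, mem_image_of_mem _ hx⟩ (forall_mem_image.2 hmin)
    _ = bpsMass lam J Q ^ 2 := by rw [← mextJQ_sq J Q hlam, h]

lemma abs_eq_bpsCharge_bpsMass (hlam : 0 < lam) {x : ℝ} (hx : 0 < x)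
    (h₁ : x + lam * x ^ 2 = Q ^ 2) (h₂ : |J| = √lam * x * |Q|) :
    |Q| = bpsCharge lam J (bpsMass lam J Q) := by
  have ht : 0 < √lam := sqrt_pos.2 hlam
  have hq : 0 < |Q| := abs_pos.2 fun hQ ↦ by
    rw [hQ] at h₁
    nlinarith [show 0 < x + lam * x ^ 2 by positivity]
  have h₁' : x + √lam ^ 2 * x ^ 2 = |Q| ^ 2 := by rw [sq_sqrt hlam.le, sq_abs]; exact h₁
  unfold bpsCharge bpsMass
  generalize hm_def : √lam * |J| + |Q| = m
  have hm : 0 < m := hm_def ▸ by positivity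
  have hxm : x * m = |Q| ^ 3 := by
    rw [← hm_def, h₂]
    linear_combination |Q| * h₁'
  have e₁ : 1 - √lam * |J| / m = |Q| / m := by
    field_simp
    linear_combination -hm_def
  have e₂ : |J| / (√lam * m) = (|Q| ^ 2 / m) ^ 2 := by
    rw [h₂]
    field_simp
    linear_combination hxm
  rw [e₁, e₂, sqrt_sq (by positivity)]
  field_simp

lemma sqrt_mul_sq_mul_sq_eq_of_abs_eq_bpsCharge (hlam : 0 < lam) {m : ℝ} (hm : √lam * |J| < m)
    (hQ : |Q| = bpsCharge lam J m) :
    √lam * |Q| ^ 2 * (m - √lam * |J|) ^ 2 = |J| * m := by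
  have ht : 0 < √lam := sqrt_pos.2 hlam
  have hm₀ : 0 < m := (by positivity : 0 ≤ √lam * |J|).trans_lt hm
  have hd : 0 < 1 - √lam * |J| / m := by rwa [sub_pos, div_lt_one hm₀]
  have hsq : |Q| ^ 2 * (1 - √lam * |J| / m) ^ 2 = |J| / (√lam * m) := by
    rw [hQ, bpsCharge, div_pow, sq_sqrt (by positivity), div_mul_cancel₀ _ (by positivity)]
  field_simp at hsq
  linear_combination hsq

lemma massSq_eq_of_abs_eq_bpsCharge (hlam : 0 < lam) (hJ : J ≠ 0) {m : ℝ}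
    (hm : √lam * |J| < m) (hQ : |Q| = bpsCharge lam J m) :
    massSq lam J Q (|J| / (√lam * (m - √lam * |J|))) =
      bpsMass lam J Q ^ 2 + √lam * |J| * (m - bpsMass lam J Q) ^ 2 / (m - √lam * |J|) := by
  have hR := sqrt_mul_sq_mul_sq_eq_of_abs_eq_bpsCharge hlam hm hQ
  have ht : 0 < √lam := sqrt_pos.2 hlam
  have hj : 0 < |J| := abs_pos.2 hJ
  obtain ⟨d, hd, rfl⟩ : ∃ d > 0, m = d + √lam * |J| :=
    ⟨m - √lam * |J|, sub_pos.2 hm, by ring⟩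
  rw [add_sub_cancel_right] at hR ⊢
  have h₁ : |J| / (√lam * d) + lam * (|J| / (√lam * d)) ^ 2 - Q ^ 2 = 0 := by
    rw [← sq_abs Q, ← sq_sqrt hlam.le, sqrt_sq ht.le]
    field_simp
    linear_combination -hR
  have h₂ : |J| - √lam * (|J| / (√lam * d)) * |Q|
      = |J| * (d + √lam * |J| - bpsMass lam J Q) / d := by
    unfold bpsMass
    field_simp
    ring
  rw [massSq_eq_bpsMass_sq_add J Q hlam.le (by positivity), h₁, h₂]
  field_simp
  ring

lemma le_bpsMass_of_abs_eq_bpsCharge (hlam : 0 < lam) (hJ : J ≠ 0) {m : ℝ}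
    (hm : √lam * |J| < m) (hle : ∀ x > 0, m ^ 2 ≤ massSq lam J Q x)
    (hQ : |Q| = bpsCharge lam J m) : m ≤ bpsMass lam J Q := by
  have ht : 0 < √lam := sqrt_pos.2 hlam
  have hd : 0 < m - √lam * |J| := sub_pos.2 hm
  have h := hle (|J| / (√lam * (m - √lam * |J|))) (by have := abs_pos.2 hJ; positivity)
  rw [massSq_eq_of_abs_eq_bpsCharge hlam hJ hm hQ, ← sub_le_iff_le_add', le_div_iff₀ hd] at h
  by_contra! hlt
  have hj : 0 ≤ √lam * |J| := by positivity
  set b := bpsMass lam J Q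
  have hb : √lam * |J| ≤ b := le_add_of_nonneg_right (abs_nonneg Q)
  have he : 0 < m - b := sub_pos.2 hlt
  have h' : (m - b) * ((m + b) * (m - √lam * |J|)) ≤ (m - b) * (√lam * |J| * (m - b)) := by
    linear_combination h
  have key := le_of_mul_le_mul_left h' he
  nlinarith [mul_le_mul_of_nonneg_left (by linarith : m - b ≤ m - √lam * |J|) hj,
    mul_pos (by linarith : 0 < m + b - √lam * |J|) hd]

end

/-- Comparison of the extremal mass with the BPS bound `m_bps = √λ|J| + |Q|`:
`m_ext ≥ m_bps` with equality iff `|Q| = Q₀ = (|J|/(√λ m))^{1/2}/(1 − √λ|J|/m)`,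
where `m = m_ext`. -/
theorem stmt19 (lam J Q : ℝ) (hlam : 0 < lam)
    (hm : 0 < mextJQ lam J Q) (hJm : Real.sqrt lam * |J| < mextJQ lam J Q) :
    Real.sqrt lam * |J| + |Q| ≤ mextJQ lam J Q ∧
      (mextJQ lam J Q = Real.sqrt lam * |J| + |Q| ↔
        |Q| = Real.sqrt (|J| / (Real.sqrt lam * mextJQ lam J Q)) /
          (1 - Real.sqrt lam * |J| / mextJQ lam J Q)) := by
  have hJQ : J ≠ 0 ∨ Q ≠ 0 := by
    by_contra! h
    obtain ⟨rfl, rfl⟩ := h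
    exact hm.ne' (mextJQ_zero_zero hlam.le)
  refine ⟨bpsMass_le_mextJQ J Q hlam.le, fun h ↦ ?_, fun hQ ↦ ?_⟩
  · obtain ⟨x, hx, hx_eq⟩ := exists_massSq_eq_bpsMass_sq_of_mextJQ_eq hlam.le hJQ h
    obtain ⟨h₁, h₂⟩ := (massSq_eq_bpsMass_sq_iff J Q hlam.le hx).1 hx_eq
    rw [h]
    exact abs_eq_bpsCharge_bpsMass hlam hx h₁ h₂
  · rcases eq_or_ne J 0 with rfl | hJ
    · simp at hQ
      simp [hQ] at hJQ
    · exact le_antisymm (le_bpsMass_of_abs_eq_bpsCharge hlam hJ hJm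
        (fun x hx ↦ mextJQ_sq_le_massSq J Q hlam.le hx) hQ) (bpsMass_le_mextJQ J Q hlam.le)
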